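/- arXiv:1805.00810 — 5 statements merged into one kernel-verified Lean document; each statement's English description precedes it below -/
import Mathlib

section
/- For the generalized symmetric metric connection ∇̄ of type (α,β) on an LP-Sasakian manifold, (∇̄_U φ)V = [(1−β)g(U,V) + (2−2β)η(U)η(V) − α g(φU,V)]ξ + (1−β)η(V)U − α η(V)φU for all vector fields U, V. -/
/-- An abstract (algebraic) model of an LP-Sasakian manifold: `F` plays the role of the
ring of smooth functions, `V` the module of vector fields, `g` the Lorentzian metric,
`phi, xi, eta` the structure tensors, `act` the action of vector fields on functions,
`bracket` the Lie bracket and `nabla` the Levi-Civita connection of `g`. -/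
structure LPSasakian (F : Type) [CommRing F] (V : Type) [AddCommGroup V]
    [Module F V] where
  g : V →ₗ[F] V →ₗ[F] F
  phi : V →ₗ[F] V
  xi : V
  eta : V →ₗ[F] F
  bracket : V → V → V
  act : V → F → F
  nabla : V → V → V
  g_symm : ∀ U W, g U W = g W U
  g_nondeg : ∀ U, (∀ W, g U W = 0) → U = 0
  eta_xi : eta xi = -1
  phi_sq : ∀ U, phi (phi U) = U + eta U • xi
  g_phi_phi : ∀ U W, g (phi U) (phi W) = g U W + eta U * eta W
  g_xi : ∀ U, g U xi = eta U
  nabla_xi : ∀ U, nabla U xi = phi U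
  nabla_phi : ∀ U W,
    nabla U (phi W) - phi (nabla U W)
      = g U W • xi + eta W • U + (2 * (eta U * eta W)) • xi
  nabla_add_left : ∀ U₁ U₂ W, nabla (U₁ + U₂) W = nabla U₁ W + nabla U₂ W
  nabla_smul_left : ∀ (f : F) U W, nabla (f • U) W = f • nabla U W
  nabla_add_right : ∀ U W₁ W₂, nabla U (W₁ + W₂) = nabla U W₁ + nabla U W₂
  nabla_leibniz : ∀ (f : F) U W, nabla U (f • W) = act U f • W + f • nabla U W
  act_add : ∀ U f₁ f₂, act U (f₁ + f₂) = act U f₁ + act U f₂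
  act_mul : ∀ U f₁ f₂, act U (f₁ * f₂) = act U f₁ * f₂ + f₁ * act U f₂
  act_smul_left : ∀ (f h : F) U, act (f • U) h = f * act U h
  act_add_left : ∀ U₁ U₂ f, act (U₁ + U₂) f = act U₁ f + act U₂ f
  act_bracket : ∀ U W f, act (bracket U W) f = act U (act W f) - act W (act U f)
  bracket_antisymm : ∀ U W, bracket U W = - bracket W U
  metric_compat : ∀ X Y Z, act X (g Y Z) = g (nabla X Y) Z + g Y (nabla X Z)
  torsion_free : ∀ X Y, nabla X Y - nabla Y X = bracket X Y

namespace LPSasakian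

variable {F : Type} [CommRing F] {V : Type} [AddCommGroup V] [Module F V]

/-- The generalized symmetric metric connection of type `(α, β)`:
`∇̄_U W = ∇_U W + α{η(W)U − g(U,W)ξ} + β{η(W)φU − g(φU,W)ξ}`. -/
def gconn (L : LPSasakian F V) (α β : F) (U W : V) : V :=
  L.nabla U W + (α * L.eta W) • U - (α * (L.g U W)) • L.xi
    + (β * L.eta W) • L.phi U - (β * (L.g (L.phi U) W)) • L.xi

/-- The curvature tensor of a connection `D`:
`R(U,W)Z = D_U D_W Z − D_W D_U Z − D_{[U,W]} Z`. -/
def curv (L : LPSasakian F V) (D : V → V → V) (U W Z : V) : V :=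
  D U (D W Z) - D W (D U Z) - D (L.bracket U W) Z

/-- The Ricci tensor of a connection `D` with respect to an orthonormal frame `ν`
with signs `ε` : `S(Y,Z) = Σᵢ εᵢ g(R(νᵢ,Y)Z, νᵢ)`. -/
def ricci (L : LPSasakian F V) (D : V → V → V) {n : ℕ}
    (ν : Fin n → V) (ε : Fin n → F) (Y Z : V) : F :=
  ∑ i, ε i * L.g (L.curv D (ν i) Y Z) (ν i)

/-- `trace Φ = Σᵢ εᵢ Φ(νᵢ,νᵢ)` where `Φ(U,V) = g(φU,V)`. -/
def traceΦ (L : LPSasakian F V) {n : ℕ} (ν : Fin n → V) (ε : Fin n → F) : F :=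
  ∑ i, ε i * L.g (L.phi (ν i)) (ν i)

end LPSasakian

namespace Aux



variable {F : Type} [CommRing F] {V : Type} [AddCommGroup V] [Module F V]
variable (L : LPSasakian F V)

lemma eta_phi_phi (X : V) : L.eta (L.phi (L.phi X)) = 0 := by
  rw [L.phi_sq, map_add, map_smul, L.eta_xi, smul_eq_mul]; ring

lemma eta_phi (X : V) :
    L.eta (L.phi X) = -(L.eta (L.phi L.xi) * L.eta X) := by
  have h := eta_phi_phi L (L.phi X)
  rw [show L.phi (L.phi X) = X + L.eta X • L.xi from L.phi_sq X] at h
  simp only [map_add, map_smul, smul_eq_mul] at h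
  linear_combination h

lemma c_sq : L.eta (L.phi L.xi) * L.eta (L.phi L.xi) = 0 := by
  have h := eta_phi L (L.phi L.xi)
  rw [eta_phi_phi L L.xi, eta_phi L L.xi, L.eta_xi] at h
  linear_combination h

lemma act_zero (U : V) : L.act U 0 = 0 := by
  have h := L.act_add U 0 0
  rw [add_zero] at h; linear_combination -h

lemma act_neg_one (U : V) : L.act U (-1) = 0 := by
  have h1 : L.act U (1:F) = 0 := by
    have h := L.act_mul U 1 1
    rw [mul_one, one_mul] at h; linear_combination -h
  have h := L.act_add U 1 (-1)
  rw [add_neg_cancel, act_zero] at h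
  linear_combination -h - h1

lemma two_c : 2 * L.eta (L.phi L.xi) = 0 := by
  have h := L.metric_compat L.xi L.xi L.xi
  rw [L.nabla_xi, L.g_xi, L.eta_xi, act_neg_one, L.g_xi,
    L.g_symm L.xi (L.phi L.xi), L.g_xi] at h
  linear_combination -h

lemma g_phi_left (U W : V) :
    L.g (L.phi U) W = L.g U (L.phi W) + L.eta U * L.eta (L.phi W)
      - L.eta W * L.eta (L.phi U) := by
  have h := L.g_phi_phi U (L.phi W)
  rw [show L.phi (L.phi W) = W + L.eta W • L.xi from L.phi_sq W, map_add, map_smul,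
    smul_eq_mul, L.g_xi] at h
  linear_combination h

lemma g_sym_phi (U W : V) : L.g U (L.phi W) = L.g (L.phi U) W := by
  rw [g_phi_left, eta_phi L W, eta_phi L U]; ring

lemma phi_xi : L.phi L.xi = (-(L.eta (L.phi L.xi))) • L.xi := by
  have key : ∀ W, L.g (L.phi L.xi + L.eta (L.phi L.xi) • L.xi) W = 0 := by
    intro W
    rw [map_add, LinearMap.add_apply, map_smul, LinearMap.smul_apply, smul_eq_mul,
      L.g_symm (L.phi L.xi) W, g_sym_phi L W L.xi, L.g_xi, eta_phi L W,
      L.g_symm L.xi W, L.g_xi]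
    ring
  have h0 := L.g_nondeg _ key
  linear_combination (norm := module) h0


lemma nabla_phi_xi (U : V) : L.nabla U (L.phi L.xi) = 0 := by
  have h := L.nabla_phi U L.xi
  rw [L.nabla_xi, L.phi_sq, L.g_xi, L.eta_xi] at h
  linear_combination (norm := module) h

lemma c_phi (U : V) : L.eta (L.phi L.xi) • L.phi U = 0 := by
  have h := nabla_phi_xi L U
  rw [phi_xi L, L.nabla_leibniz, L.nabla_xi] at h
  have h2 := congrArg L.eta h
  simp only [map_add, map_smul, map_zero, smul_eq_mul] at h2
  rw [L.eta_xi, eta_phi L U] at h2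
  have hcc := c_sq L
  have hact : L.act U (-(L.eta (L.phi L.xi))) = 0 := by
    linear_combination -h2 + (L.eta U) * hcc
  rw [hact, zero_smul, zero_add] at h
  linear_combination (norm := module) -h

lemma c_smul (X : V) :
    L.eta (L.phi L.xi) • X + (L.eta (L.phi L.xi) * L.eta X) • L.xi = 0 := by
  have h := congrArg L.phi (c_phi L X)
  rw [map_smul, L.phi_sq, map_zero] at h
  linear_combination (norm := module) h

end Aux

open LPSasakian in
/-- `(∇̄_U φ)W = [(1−β)g(U,W) + (2−2β)η(U)η(W) − α g(φU,W)]ξ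
+ (1−β)η(W)U − α η(W)φU` for the generalized symmetric metric connection. -/
theorem statement1 {F : Type} [CommRing F] {V : Type} [AddCommGroup V] [Module F V]
    (L : LPSasakian F V) (α β : F) :
    ∀ U W : V,
      L.gconn α β U (L.phi W) - L.phi (L.gconn α β U W)
        = ((1 - β) * L.g U W + (2 - 2 * β) * (L.eta U * L.eta W)
            - α * L.g (L.phi U) W) • L.xi
          + ((1 - β) * L.eta W) • U - (α * L.eta W) • L.phi U := by
  intro U W
  have h1 : L.nabla U (L.phi W) = L.phi (L.nabla U W) + L.g U W • L.xi
      + L.eta W • U + (2 * (L.eta U * L.eta W)) • L.xi := by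
    linear_combination (norm := module) L.nabla_phi U W
  have z1 := Aux.c_smul L U
  have z2 := Aux.c_smul L (L.phi U)
  have hpp := L.g_phi_phi U W
  have hsym := Aux.g_sym_phi L U W
  have heW := Aux.eta_phi L W
  have heU := Aux.eta_phi L U
  have h2c := Aux.two_c L
  have hcc := Aux.c_sq L
  have hcg1 := congrArg (fun Z => L.g Z W) z1
  have hcg2 := congrArg (fun Z => L.g Z W) z2
  simp only [map_add, map_smul, map_zero, LinearMap.add_apply, LinearMap.smul_apply,
    LinearMap.zero_apply, smul_eq_mul, L.g_symm L.xi W, L.g_xi] at hcg1 hcg2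
  simp only [gconn]
  rw [h1]
  simp only [map_add, map_sub, map_smul]
  rw [L.phi_sq U, Aux.phi_xi L]
  linear_combination (norm := match_scalars) (α * L.eta W) • z1 + (β * L.eta W) • z2
  · ring1
  · linear_combination (-α) * hsym - β * hpp - α * hcg1 - β * hcg2
  · linear_combination α * heW - (α * L.eta W) * h2c
  · linear_combination β * heW - (β * L.eta W) * h2c
end

section
/- Let M be a CR-submanifold of an LP-Sasakian manifold M' with generalized symmetric metric connection ∇̄, with induced connection ∇̄' and second fundamental form h̄. Then h̄(X,Y) = h(X,Y) + β η(Y) φQX for all X, Y tangent to M, where h is the second fundamental form with respect to the Levi-Civita connection and Q is the projection onto the totally real distribution D^⊥. -/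
/-- A CR-submanifold of an LP-Sasakian "manifold" `L`: `tan` is the orthogonal
projection of ambient vector fields onto fields tangent to the submanifold, and
`P`, `Q` are the projections onto the invariant distribution `D` and the totally
real distribution `D^⊥` respectively. -/
structure CRSubmanifold (F : Type) [CommRing F] (V : Type) [AddCommGroup V]
    [Module F V] (L : LPSasakian F V) where
  tan : V →ₗ[F] V
  P : V →ₗ[F] V
  Q : V →ₗ[F] V
  tan_idem : ∀ X, tan (tan X) = tan X
  tan_orth : ∀ X Y, L.g (tan X) (Y - tan Y) = 0
  PQ_sum : ∀ X, P X + Q X = tan X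
  P_idem : ∀ X, P (P X) = P X
  Q_idem : ∀ X, Q (Q X) = Q X
  PQ_zero : ∀ X, P (Q X) = 0
  QP_zero : ∀ X, Q (P X) = 0
  tan_P : ∀ X, tan (P X) = P X
  tan_Q : ∀ X, tan (Q X) = Q X
  g_PQ : ∀ X Y, L.g (P X) (Q Y) = 0
  phi_D : ∀ X, P (L.phi (P X)) = L.phi (P X)
  phi_Dperp_normal : ∀ X, tan (L.phi (Q X)) = 0
  xi_tangent : tan L.xi = L.xi
  bracket_tangent : ∀ X Y, tan X = X → tan Y = Y →
    tan (L.bracket X Y) = L.bracket X Y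

namespace CRSubmanifold

variable {F : Type} [CommRing F] {V : Type} [AddCommGroup V] [Module F V]
variable {L : LPSasakian F V}

/-- The second fundamental form of the submanifold with respect to a connection `D`
(the normal part of `D_X Y`). -/
def sff (M : CRSubmanifold F V L) (D : V → V → V) (X Y : V) : V :=
  D X Y - M.tan (D X Y)

/-- The induced connection on the submanifold from a connection `D`
(the tangential part of `D_X Y`). -/
def ind (M : CRSubmanifold F V L) (D : V → V → V) (X Y : V) : V :=
  M.tan (D X Y)

/-- The shape operator `A_N X` with respect to the Levi-Civita connection:
`∇_X N = −A_N X + ∇^⊥_X N`. -/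
def shape (M : CRSubmanifold F V L) (N X : V) : V :=
  - M.tan (L.nabla X N)

/-- For a normal field `N`, the component `CN` of `φN` in the invariant normal
subbundle `μ` (`φN = BN + CN`, `BN ∈ D^⊥` tangent, `CN` normal). -/
def Cproj (M : CRSubmanifold F V L) (N : V) : V :=
  L.phi N - M.tan (L.phi N)

end CRSubmanifold

open LPSasakian CRSubmanifold in
/-- `h̄(X,Y) = h(X,Y) + β η(Y) φQX` for X, Y tangent to the
CR-submanifold. -/
theorem statement13 {F : Type} [CommRing F] {V : Type} [AddCommGroup V] [Module F V]
    (L : LPSasakian F V) (M : CRSubmanifold F V L) (α β : F) :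
    ∀ X Y : V, M.tan X = X → M.tan Y = Y →
      M.sff (L.gconn α β) X Y
        = M.sff L.nabla X Y + (β * L.eta Y) • L.phi (M.Q X) := by
  intro X Y hX hY
  have hphiP : M.tan (L.phi (M.P X)) = L.phi (M.P X) := by
    rw [← M.phi_D X, M.tan_P]
  have hx : M.P X + M.Q X = X := (M.PQ_sum X).trans hX
  have hphiX : M.tan (L.phi X) = L.phi X - L.phi (M.Q X) := by
    conv_lhs => rw [← hx]
    rw [map_add, map_add, hphiP, M.phi_Dperp_normal, ← hx]
    simp only [map_add, M.P_idem, M.PQ_zero, M.Q_idem, M.QP_zero, map_zero]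
    abel
  simp only [CRSubmanifold.sff, LPSasakian.gconn, map_add, map_sub, map_smul,
    hX, M.xi_tangent, hphiX]
  module
end

section
/- Let M be a ξ-vertical CR-submanifold of an LP-Sasakian manifold M' with generalized symmetric metric connection, and suppose the distribution D^⊥ is parallel with respect to the induced connection ∇̄'. Then for X, Y ∈ Γ(D^⊥), ∇̄'_X Y = ∇'_X Y + α η(Y)X − α g(X,Y)ξ − β g(φX,Y)ξ, and consequently (∇̄'_X g)(Y,Z) = β{η(Y)g(φX,Z) + η(Z)g(φX,Y)}; i.e., ∇̄' is a generalized symmetric non-metric connection. -/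
open LPSasakian CRSubmanifold in
/-- if M is ξ-vertical and `D^⊥` is parallel with respect to the induced
connection `∇̄'`, then for X, Y, Z ∈ Γ(D^⊥):
`∇̄'_X Y = ∇'_X Y + α η(Y)X − α g(X,Y)ξ − β g(φX,Y)ξ` and
`(∇̄'_X g)(Y,Z) = β{η(Y)g(φX,Z) + η(Z)g(φX,Y)}`. -/
theorem statement14 {F : Type} [CommRing F] {V : Type} [AddCommGroup V] [Module F V]
    (L : LPSasakian F V) (M : CRSubmanifold F V L) (α β : F)
    (h_vertical : M.Q L.xi = L.xi)
    (h_parallel : ∀ X Y : V, M.Q X = X → M.Q Y = Y →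
      M.Q (M.ind (L.gconn α β) X Y) = M.ind (L.gconn α β) X Y) :
    (∀ X Y : V, M.Q X = X → M.Q Y = Y →
      M.ind (L.gconn α β) X Y
        = M.ind L.nabla X Y + (α * L.eta Y) • X - (α * L.g X Y) • L.xi
          - (β * L.g (L.phi X) Y) • L.xi)
    ∧ (∀ X Y Z : V, M.Q X = X → M.Q Y = Y → M.Q Z = Z →
        L.act X (L.g Y Z) - L.g (M.ind (L.gconn α β) X Y) Z
            - L.g Y (M.ind (L.gconn α β) X Z)
          = β * (L.eta Y * L.g (L.phi X) Z + L.eta Z * L.g (L.phi X) Y)) := by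

  have htan : ∀ X : V, M.Q X = X → M.tan X = X := fun X h => by
    conv_lhs => rw [← h]
    rw [M.tan_Q, h]
  have hphi : ∀ X : V, M.Q X = X → M.tan (L.phi X) = 0 := fun X h => by
    conv_lhs => rw [← h]
    exact M.phi_Dperp_normal X
  have hgt : ∀ (W Z : V), M.tan Z = Z → L.g W Z = L.g (M.tan W) Z := by
    intro W Z hZ
    have h0 := M.tan_orth Z W
    rw [map_sub] at h0
    have h1 : L.g (M.tan Z) W = L.g (M.tan Z) (M.tan W) := by
      have := sub_eq_zero.mp h0; exact this
    rw [L.g_symm W Z, ← hZ, h1, hZ, L.g_symm]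
  have part1 : ∀ X Y : V, M.Q X = X → M.Q Y = Y →
      M.ind (L.gconn α β) X Y
        = M.ind L.nabla X Y + (α * L.eta Y) • X - (α * L.g X Y) • L.xi
          - (β * L.g (L.phi X) Y) • L.xi := by
    intro X Y hX hY
    unfold CRSubmanifold.ind LPSasakian.gconn
    simp only [map_add, map_sub, map_smul, htan X hX, M.xi_tangent, hphi X hX, smul_zero]
    abel
  refine ⟨part1, ?_⟩
  intro X Y Z hX hY hZ
  have htY := htan Y hY
  have htZ := htan Z hZ
  rw [part1 X Y hX hY, part1 X Z hX hZ]
  unfold CRSubmanifold.ind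
  have hnY : L.g (M.tan (L.nabla X Y)) Z = L.g (L.nabla X Y) Z :=
    (hgt (L.nabla X Y) Z htZ).symm
  have hnZ : L.g Y (M.tan (L.nabla X Z)) = L.g Y (L.nabla X Z) := by
    rw [L.g_symm]; exact ((hgt (L.nabla X Z) Y htY).symm).trans (L.g_symm _ _)
  rw [L.metric_compat X Y Z]
  simp only [map_add, map_sub, map_smul, LinearMap.add_apply, LinearMap.sub_apply,
    LinearMap.smul_apply, smul_eq_mul, hnY, hnZ, L.g_xi]
  have hZxi : L.g Z L.xi = L.eta Z := L.g_xi Z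
  have hYxi : L.g Y L.xi = L.eta Y := L.g_xi Y
  have hXZ : L.g X Z = L.g Z X := L.g_symm X Z
  have hs1 : L.g Y X = L.g X Y := L.g_symm Y X
  have hs2 : L.g Y (L.phi X) = L.g (L.phi X) Y := L.g_symm Y (L.phi X)
  have hxiZ : L.g L.xi Z = L.eta Z := (L.g_symm _ _).trans (L.g_xi Z)
  ring_nf
  rw [hxiZ, hs1]
  ring
end

section
/- Let M be a ξ-vertical CR-submanifold of an LP-Sasakian manifold M' with generalized symmetric metric connection. Then for any X, Y ∈ Γ(D), φ C h(X,Y) = C h(φX, Y) = C h(X, φY), where h is the second fundamental form (Levi-Civita) and C is the projection of a normal vector onto the invariant normal subbundle μ (i.e., φN = BN + CN with BN ∈ D^⊥, CN ∈ μ). -/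
section Aux
open LPSasakian CRSubmanifold

variable {F : Type} [CommRing F] {V : Type} [AddCommGroup V] [Module F V]
variable {L : LPSasakian F V} (M : CRSubmanifold F V L)

lemma aux_tan_adj (X Y : V) : L.g (M.tan X) Y = L.g X (M.tan Y) := by
  have h1 := M.tan_orth X Y
  have h2 := M.tan_orth Y X
  rw [map_sub, sub_eq_zero] at h1 h2
  calc L.g (M.tan X) Y = L.g (M.tan X) (M.tan Y) := h1
  _ = L.g (M.tan Y) (M.tan X) := L.g_symm _ _
  _ = L.g (M.tan Y) X := h2.symm
  _ = L.g X (M.tan Y) := L.g_symm _ _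

lemma aux_P_adj (X Y : V) : L.g (M.P X) Y = L.g X (M.P Y) := by
  have hx : L.g (M.P X) Y = L.g (M.P X) (M.P Y) := by
    have h := M.tan_orth (M.P X) Y
    rw [M.tan_P, map_sub, sub_eq_zero] at h
    rw [h, ← M.PQ_sum, map_add, M.g_PQ, add_zero]
  have hy : L.g (M.P Y) X = L.g (M.P Y) (M.P X) := by
    have h := M.tan_orth (M.P Y) X
    rw [M.tan_P, map_sub, sub_eq_zero] at h
    rw [h, ← M.PQ_sum, map_add, M.g_PQ, add_zero]
  rw [hx, L.g_symm, ← hy, L.g_symm]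

lemma aux_eta_of_P (hv : M.Q L.xi = L.xi) (X : V) : L.eta (M.P X) = 0 := by
  rw [← L.g_xi, ← hv, M.g_PQ]

lemma aux_eta_normal {N : V} (hN : M.tan N = 0) : L.eta N = 0 := by
  have h := M.tan_orth L.xi N
  rw [M.xi_tangent, hN, sub_zero] at h
  rw [← L.g_xi, L.g_symm, h]

lemma aux_g_phi_swap (L : LPSasakian F V) (U W : V) :
    L.g (L.phi U) W
      = L.g U (L.phi W) + L.eta U * L.eta (L.phi W) - L.eta W * L.eta (L.phi U) := by
  have h := L.g_phi_phi U (L.phi W)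
  rw [L.phi_sq, map_add, map_smul, L.g_xi, smul_eq_mul] at h
  linear_combination h

lemma aux_g_normal_tan {N : V} (hN : M.tan N = 0) (W : V) : L.g N (M.tan W) = 0 := by
  have h := M.tan_orth W N
  rw [hN, sub_zero] at h
  calc L.g N (M.tan W) = L.g (M.tan W) N := L.g_symm _ _
  _ = 0 := h

lemma aux_P_tan_phi (hv : M.Q L.xi = L.xi) {N : V} (hN : M.tan N = 0) :
    M.P (M.tan (L.phi N)) = 0 := by
  apply L.g_nondeg
  intro W
  rw [aux_P_adj, aux_tan_adj, M.tan_P, aux_g_phi_swap, aux_eta_normal M hN,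
    aux_eta_of_P M hv, zero_mul, zero_mul, add_zero, sub_zero]
  have h1 : L.phi (M.P W) = M.tan (M.P (L.phi (M.P W))) := by
    rw [M.tan_P, M.phi_D]
  rw [h1]
  exact aux_g_normal_tan M hN _

lemma aux_nabla_phi_tangent (hv : M.Q L.xi = L.xi) (X Y : V)
    (hX : M.P X = X) (hY : M.P Y = Y) :
    L.nabla X (L.phi Y) = L.phi (L.nabla X Y) + L.g X Y • L.xi := by
  have h := L.nabla_phi X Y
  have hx : L.eta X = 0 := by rw [← hX]; exact aux_eta_of_P M hv X
  have hy : L.eta Y = 0 := by rw [← hY]; exact aux_eta_of_P M hv Y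
  rw [hx, hy, mul_zero, mul_zero, zero_smul, zero_smul, add_zero, add_zero,
    sub_eq_iff_eq_add] at h
  rw [h]; abel

lemma aux_sff_symm (X Y : V) (hX : M.tan X = X) (hY : M.tan Y = Y) :
    M.sff L.nabla X Y = M.sff L.nabla Y X := by
  have hb := M.bracket_tangent X Y hX hY
  have ht := L.torsion_free X Y
  have hXY : L.nabla X Y = L.nabla Y X + L.bracket X Y := by
    rw [← ht]; abel
  unfold CRSubmanifold.sff
  rw [hXY, map_add, hb]; abel

lemma aux_normal_phi_decomp (D : V) (s : F) :
    (L.phi D + s • L.xi) - M.tan (L.phi D + s • L.xi)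
      = L.phi (M.Q (M.tan D))
        + (L.phi (D - M.tan D) - M.tan (L.phi (D - M.tan D))) := by
  have e1 : M.tan (L.phi (M.P (M.tan D))) = L.phi (M.P (M.tan D)) := by
    conv_lhs => rw [← M.phi_D (M.tan D)]
    rw [M.tan_P, M.phi_D]
  have e2 : M.tan (L.phi (M.Q (M.tan D))) = 0 := M.phi_Dperp_normal (M.tan D)
  have hsplit : L.phi D
      = L.phi (M.P (M.tan D)) + L.phi (M.Q (M.tan D)) + L.phi (D - M.tan D) := by
    rw [← map_add, ← map_add, M.PQ_sum, M.tan_idem]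
    congr 1
    abel
  rw [hsplit]
  simp only [map_add, map_smul, M.xi_tangent, e1, e2]
  abel

lemma aux_Cproj_phi_Q (W : V) : M.Cproj (L.phi (M.Q W)) = 0 := by
  unfold CRSubmanifold.Cproj
  rw [L.phi_sq, map_add, map_smul, M.tan_Q, M.xi_tangent]
  abel

lemma aux_Cproj_add (A B : V) : M.Cproj (A + B) = M.Cproj A + M.Cproj B := by
  unfold CRSubmanifold.Cproj
  rw [map_add, map_add]; abel

lemma aux_phi_Cproj (hv : M.Q L.xi = L.xi) {N : V} (hN : M.tan N = 0) :
    L.phi (M.Cproj N) = M.Cproj (M.Cproj N) := by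
  have hP : M.P (M.tan (L.phi N)) = 0 := aux_P_tan_phi M hv hN
  have hB : M.tan (L.phi N) = M.Q (M.tan (L.phi N)) := by
    conv_lhs => rw [← M.tan_idem (L.phi N), ← M.PQ_sum]
    rw [hP, zero_add]
  have htB : M.tan (L.phi (M.tan (L.phi N))) = 0 := by
    rw [hB]
    exact M.phi_Dperp_normal _
  have hee : L.eta N = 0 := aux_eta_normal M hN
  unfold CRSubmanifold.Cproj
  simp only [map_sub, L.phi_sq, hee, zero_smul, add_zero, hN, htB]
  abel

lemma aux_tan_sff (U W : V) : M.tan (M.sff L.nabla U W) = 0 := by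
  unfold CRSubmanifold.sff
  rw [map_sub, M.tan_idem, sub_self]

lemma aux_sff_phi_right (hv : M.Q L.xi = L.xi) (X Y : V)
    (hX : M.P X = X) (hY : M.P Y = Y) :
    M.sff L.nabla X (L.phi Y)
      = L.phi (M.Q (M.tan (L.nabla X Y))) + M.Cproj (M.sff L.nabla X Y) := by
  unfold CRSubmanifold.sff CRSubmanifold.Cproj
  rw [aux_nabla_phi_tangent M hv X Y hX hY]
  exact aux_normal_phi_decomp M _ _

end Aux

open LPSasakian CRSubmanifold in
/-- for a ξ-vertical CR-submanifold and X, Y ∈ Γ(D),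
`φ C h(X,Y) = C h(φX,Y) = C h(X,φY)`. -/
theorem statement17 {F : Type} [CommRing F] {V : Type} [AddCommGroup V] [Module F V]
    (L : LPSasakian F V) (M : CRSubmanifold F V L) (α β : F)
    (h_vertical : M.Q L.xi = L.xi) :
    ∀ X Y : V, M.P X = X → M.P Y = Y →
      L.phi (M.Cproj (M.sff L.nabla X Y)) = M.Cproj (M.sff L.nabla (L.phi X) Y)
      ∧ M.Cproj (M.sff L.nabla (L.phi X) Y)
          = M.Cproj (M.sff L.nabla X (L.phi Y)) := by
  
  intro X Y hX hY
  have hXt : M.tan X = X := by rw [← hX, M.tan_P, hX]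
  have hYt : M.tan Y = Y := by rw [← hY, M.tan_P, hY]
  have hpX : M.P (L.phi X) = L.phi X := by
    conv_lhs => rw [← hX]
    rw [M.phi_D, hX]
  have hpXt : M.tan (L.phi X) = L.phi X := by
    rw [← hpX, M.tan_P, hpX]
  have hN : M.tan (M.sff L.nabla X Y) = 0 := aux_tan_sff M X Y
  have eq1 : M.Cproj (M.sff L.nabla X (L.phi Y))
      = M.Cproj (M.Cproj (M.sff L.nabla X Y)) := by
    rw [aux_sff_phi_right M h_vertical X Y hX hY, aux_Cproj_add, aux_Cproj_phi_Q,
      zero_add]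
  have eq2 : M.Cproj (M.sff L.nabla (L.phi X) Y)
      = M.Cproj (M.Cproj (M.sff L.nabla X Y)) := by
    rw [aux_sff_symm M (L.phi X) Y hpXt hYt,
      aux_sff_phi_right M h_vertical Y X hY hX,
      aux_sff_symm M Y X hYt hXt, aux_Cproj_add, aux_Cproj_phi_Q, zero_add]
  have eq3 : L.phi (M.Cproj (M.sff L.nabla X Y))
      = M.Cproj (M.Cproj (M.sff L.nabla X Y)) :=
    aux_phi_Cproj M h_vertical hN
  exact ⟨by rw [eq3, eq2], by rw [eq2, eq1]⟩
end

section
/- Let M be a ξ-horizontal CR-submanifold of an LP-Sasakian manifold M' with generalized symmetric metric connection. The invariant distribution D is integrable if and only if h(φX, Y) = h(φY, X) for all X, Y ∈ Γ(D), where h is the second fundamental form with respect to the Levi-Civita connection. -/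
section Aux

variable {F : Type} [CommRing F] {V : Type} [AddCommGroup V] [Module F V]
variable {L : LPSasakian F V}

/-- If `φ(QZ) = 0` then `QZ = 0` (using ξ-horizontality). -/
lemma aux_Q_eq_zero (M : CRSubmanifold F V L) (h_horizontal : M.P L.xi = L.xi)
    (Z : V) (h : L.phi (M.Q Z) = 0) : M.Q Z = 0 := by
  have heta : L.eta (M.Q Z) = 0 := by
    have hg := M.g_PQ L.xi Z
    rw [h_horizontal] at hg
    rw [← L.g_xi, L.g_symm]
    exact hg
  have hsq := L.phi_sq (M.Q Z)
  rw [h, map_zero, heta, zero_smul, add_zero] at hsq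
  exact hsq.symm

/-- The key computation: the difference of the second fundamental forms is
`-φ(Q[X,Y])`. -/
lemma aux_key (M : CRSubmanifold F V L) (X Y : V)
    (hX : M.P X = X) (hY : M.P Y = Y) :
    M.sff L.nabla (L.phi X) Y - M.sff L.nabla (L.phi Y) X
      = - L.phi (M.Q (L.bracket X Y)) := by
  -- basic tangency facts
  have htX : M.tan X = X := by rw [← hX, M.tan_P]
  have htY : M.tan Y = Y := by rw [← hY, M.tan_P]
  have hPφX : M.P (L.phi X) = L.phi X := by
    have := M.phi_D X; rwa [hX] at this
  have hPφY : M.P (L.phi Y) = L.phi Y := by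
    have := M.phi_D Y; rwa [hY] at this
  have htφX : M.tan (L.phi X) = L.phi X := by rw [← hPφX, M.tan_P]
  have htφY : M.tan (L.phi Y) = L.phi Y := by rw [← hPφY, M.tan_P]
  have hbXY_t : M.tan (L.bracket X Y) = L.bracket X Y :=
    M.bracket_tangent X Y htX htY
  have hbφXY : M.tan (L.bracket (L.phi X) Y) = L.bracket (L.phi X) Y :=
    M.bracket_tangent _ _ htφX htY
  have hbφYX : M.tan (L.bracket (L.phi Y) X) = L.bracket (L.phi Y) X :=
    M.bracket_tangent _ _ htφY htX
  have htxi : M.tan L.xi = L.xi := M.xi_tangent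
  -- nabla (φX) Y in terms of φ(nabla Y X)
  have e1 : L.nabla (L.phi X) Y
      = L.bracket (L.phi X) Y + (L.phi (L.nabla Y X)
          + (L.g Y X • L.xi + L.eta X • Y + (2 * (L.eta Y * L.eta X)) • L.xi)) := by
    have t := L.torsion_free (L.phi X) Y
    have p := L.nabla_phi Y X
    have t' : L.nabla (L.phi X) Y = L.bracket (L.phi X) Y + L.nabla Y (L.phi X) :=
      sub_eq_iff_eq_add.mp t
    have p' : L.nabla Y (L.phi X)
        = L.phi (L.nabla Y X)
          + (L.g Y X • L.xi + L.eta X • Y + (2 * (L.eta Y * L.eta X)) • L.xi) := by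
      have := sub_eq_iff_eq_add'.mp p
      rw [this]
    rw [t', p']
  have e2 : L.nabla (L.phi Y) X
      = L.bracket (L.phi Y) X + (L.phi (L.nabla X Y)
          + (L.g X Y • L.xi + L.eta Y • X + (2 * (L.eta X * L.eta Y)) • L.xi)) := by
    have t := L.torsion_free (L.phi Y) X
    have p := L.nabla_phi X Y
    have t' : L.nabla (L.phi Y) X = L.bracket (L.phi Y) X + L.nabla X (L.phi Y) :=
      sub_eq_iff_eq_add.mp t
    have p' : L.nabla X (L.phi Y)
        = L.phi (L.nabla X Y)
          + (L.g X Y • L.xi + L.eta Y • X + (2 * (L.eta X * L.eta Y)) • L.xi) := by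
      have := sub_eq_iff_eq_add'.mp p
      rw [this]
    rw [t', p']
  have hsffX : M.sff L.nabla (L.phi X) Y
      = L.phi (L.nabla Y X) - M.tan (L.phi (L.nabla Y X)) := by
    show L.nabla (L.phi X) Y - M.tan (L.nabla (L.phi X) Y) = _
    rw [e1]
    simp only [map_add, map_smul, hbφXY, htxi, htY]
    abel
  have hsffY : M.sff L.nabla (L.phi Y) X
      = L.phi (L.nabla X Y) - M.tan (L.phi (L.nabla X Y)) := by
    show L.nabla (L.phi Y) X - M.tan (L.nabla (L.phi Y) X) = _
    rw [e2]
    simp only [map_add, map_smul, hbφYX, htxi, htX]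
    abel
  -- the bracket decomposition
  have hbr : L.bracket X Y = M.P (L.bracket X Y) + M.Q (L.bracket X Y) := by
    rw [M.PQ_sum, hbXY_t]
  have hphibr : L.phi (L.bracket X Y) - M.tan (L.phi (L.bracket X Y))
      = L.phi (M.Q (L.bracket X Y)) := by
    have h1 : M.tan (L.phi (M.P (L.bracket X Y)))
        = L.phi (M.P (L.bracket X Y)) := by
      rw [← M.phi_D (L.bracket X Y), M.tan_P]
    have h2 : M.tan (L.phi (M.Q (L.bracket X Y))) = 0 := M.phi_Dperp_normal _
    conv_lhs => rw [hbr]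
    simp only [map_add, h1, h2]
    abel
  -- torsion-freeness
  have hd : L.nabla Y X = - L.bracket X Y + L.nabla X Y := by
    have t := L.torsion_free Y X
    have := sub_eq_iff_eq_add.mp t
    rw [this, L.bracket_antisymm Y X]
  rw [hsffX, hsffY, ← hphibr, hd]
  simp only [map_add, map_neg]
  abel

end Aux

open LPSasakian CRSubmanifold in
/-- for a ξ-horizontal CR-submanifold, the invariant distribution `D` is
integrable iff `h(φX,Y) = h(φY,X)` for all X, Y ∈ Γ(D). -/
theorem statement18 {F : Type} [CommRing F] {V : Type} [AddCommGroup V] [Module F V]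
    (L : LPSasakian F V) (M : CRSubmanifold F V L) (α β : F)
    (h_horizontal : M.P L.xi = L.xi) :
    (∀ X Y : V, M.P X = X → M.P Y = Y →
        M.P (L.bracket X Y) = L.bracket X Y)
    ↔ (∀ X Y : V, M.P X = X → M.P Y = Y →
        M.sff L.nabla (L.phi X) Y = M.sff L.nabla (L.phi Y) X) := by
  constructor
  · intro hint X Y hX hY
    have hQ : M.Q (L.bracket X Y) = 0 := by
      rw [← hint X Y hX hY, M.QP_zero]
    have := aux_key M X Y hX hY
    rw [hQ, map_zero, neg_zero, sub_eq_zero] at this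
    exact this
  · intro hsym X Y hX hY
    have := aux_key M X Y hX hY
    rw [hsym X Y hX hY, sub_self] at this
    have hφQ : L.phi (M.Q (L.bracket X Y)) = 0 := by
      rw [← neg_eq_zero, ← this]
    have hQ : M.Q (L.bracket X Y) = 0 :=
      aux_Q_eq_zero M h_horizontal _ hφQ
    have hbr := M.PQ_sum (L.bracket X Y)
    rw [hQ, add_zero, M.bracket_tangent X Y (by rw [← hX, M.tan_P])
      (by rw [← hY, M.tan_P])] at hbr
    exact hbr
end
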